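/- Let Ω be a connected open subset of ℂ and let T = [[T_0, S],[0, T_1]] be an operator in 𝓕B_2(Ω). Then T is strongly irreducible if and only if there exists no bounded operator X : H_1 → H_0 such that S = T_0 X − X T_1 (equivalently, S is not in the range of σ_{T_0,T_1}). -/

import Mathlib

/-!
If `S = T₀X - XT₁`, then `[[1, X], [0, 0]]` is an idempotent commuting with `T`, and it is
neither `0` nor `1`.

Conversely, let `P = [[A, B], [C, D]]` be an idempotent commuting with `T`. Comparing entries
gives `C T₀ = T₁ C` and `C S = T₁ D - D T₁`, so `C S` commutes with `T₁`; by Kleinecke–Shirokov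
it is quasinilpotent, and as it acts on each line `ker (T₁ - w)` by a scalar, it vanishes. Hence
`C` kills `ker (T₀ - w)` at every `w` where `S` does not kill `ker (T₁ - w)`. Along a holomorphic
frame of `w ↦ ker (T - w)`, the set of `w` where a bounded operator kills the fibre is the zero
set of a holomorphic function, so for a nonzero operator it is relatively closed in `Ω` with empty
interior, and two such sets cannot cover `Ω`. As `S ≠ 0`, this forces `C = 0`. The same argument
shows that operators in `B₁(Ω)` are strongly irreducible, hence `A, D ∈ {0, 1}`. In the mixed
cases the `(1,2)` entry gives `S = T₀ B - B T₁` or `S = T₀ (-B) - (-B) T₁`.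
-/

noncomputable section

open ContinuousLinearMap
open scoped InnerProductSpace

/-- The Cowen–Douglas class `B_n(Ω)`: `Ω ⊆ σ(T)`, `T - w` is surjective for every `w ∈ Ω`,
the closed linear span of the kernels `ker (T - w)`, `w ∈ Ω`, is all of `H`, and
`dim ker (T - w) = n` for every `w ∈ Ω`. -/
def CowenDouglas {H : Type*} [NormedAddCommGroup H] [InnerProductSpace ℂ H]
    (n : ℕ) (Ω : Set ℂ) (T : H →L[ℂ] H) : Prop :=
  Ω ⊆ spectrum ℂ T ∧
  (∀ w ∈ Ω, Function.Surjective (T - w • (1 : H →L[ℂ] H))) ∧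
  (⨆ w ∈ Ω, LinearMap.ker ((T - w • (1 : H →L[ℂ] H) : H →L[ℂ] H) : H →ₗ[ℂ] H)).topologicalClosure = ⊤ ∧
  (∀ w ∈ Ω, Module.finrank ℂ (LinearMap.ker ((T - w • (1 : H →L[ℂ] H) : H →L[ℂ] H) : H →ₗ[ℂ] H)) = n)

/-- The block operator `[[T₀, S], [0, T₁]]` acting on the Hilbert space orthogonal direct
sum `H₀ ⊕ H₁` (realized as the `ℓ²`-product `WithLp 2 (H₀ × H₁)`). -/
def blockOp₂ {H₀ H₁ : Type*} [NormedAddCommGroup H₀] [NormedSpace ℂ H₀]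
    [NormedAddCommGroup H₁] [NormedSpace ℂ H₁]
    (T₀ : H₀ →L[ℂ] H₀) (S : H₁ →L[ℂ] H₀) (T₁ : H₁ →L[ℂ] H₁) :
    WithLp 2 (H₀ × H₁) →L[ℂ] WithLp 2 (H₀ × H₁) :=
  ((WithLp.prodContinuousLinearEquiv 2 ℂ H₀ H₁).symm : H₀ × H₁ →L[ℂ] WithLp 2 (H₀ × H₁)) ∘L
    ((T₀ ∘L fst ℂ H₀ H₁ + S ∘L snd ℂ H₀ H₁).prod (T₁ ∘L snd ℂ H₀ H₁)) ∘L
    ((WithLp.prodContinuousLinearEquiv 2 ℂ H₀ H₁) : WithLp 2 (H₀ × H₁) →L[ℂ] H₀ × H₁)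

open Filter Function Metric Topology
open scoped Nat

section Kleinecke

variable {R : Type*} [Ring R]

def innerDeriv (a : R) : R →+ R := AddMonoidHom.mulLeft a - AddMonoidHom.mulRight a

theorem innerDeriv_apply (a x : R) : innerDeriv a x = a * x - x * a := rfl

theorem innerDeriv_mul (a x y : R) :
    innerDeriv a (x * y) = innerDeriv a x * y + x * innerDeriv a y := by
  simp only [innerDeriv_apply]; noncomm_ring

theorem innerDeriv_iterate_succ_mul {a b : R} (h : Commute a (innerDeriv a b)) (k : ℕ) (y : R) :
    (innerDeriv a)^[k + 1] (b * y) =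
      b * (innerDeriv a)^[k + 1] y + (k + 1) • (innerDeriv a b * (innerDeriv a)^[k] y) := by
  have hc : innerDeriv a (innerDeriv a b) = 0 := sub_eq_zero.mpr h.eq
  induction k with
  | zero => simp [innerDeriv_mul, add_comm]
  | succ k ih =>
    rw [iterate_succ_apply', ih, map_add, map_nsmul, innerDeriv_mul, innerDeriv_mul, hc,
      ← iterate_succ_apply' (innerDeriv a), ← iterate_succ_apply' (innerDeriv a)]
    simp only [zero_mul, zero_add, succ_nsmul _ (k + 1)]
    abel

/-- Kleinecke's identity. -/
theorem innerDeriv_iterate_pow {a b : R} (h : Commute a (innerDeriv a b)) (n : ℕ) :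
    (innerDeriv a)^[n] (b ^ n) = n ! • innerDeriv a b ^ n ∧
      (innerDeriv a)^[n + 1] (b ^ n) = 0 := by
  induction n with
  | zero => simp [innerDeriv_apply]
  | succ n ih =>
    rw [pow_succ', innerDeriv_iterate_succ_mul h, innerDeriv_iterate_succ_mul h, ih.2, ih.1,
      iterate_succ_apply', ih.2, map_zero]
    refine ⟨?_, by simp⟩
    rw [mul_zero, zero_add, mul_smul_comm, smul_smul, ← pow_succ', Nat.factorial_succ]

theorem norm_innerDeriv_iterate_le {R : Type*} [NormedRing R] (a x : R) (n : ℕ) :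
    ‖(innerDeriv a)^[n] x‖ ≤ (2 * ‖a‖) ^ n * ‖x‖ := by
  induction n with
  | zero => simp
  | succ n ih =>
    rw [iterate_succ_apply', innerDeriv_apply, pow_succ']
    calc ‖a * _ - _ * a‖ ≤ ‖a‖ * ‖(innerDeriv a)^[n] x‖ + ‖(innerDeriv a)^[n] x‖ * ‖a‖ :=
          (norm_sub_le _ _).trans (add_le_add (norm_mul_le _ _) (norm_mul_le _ _))
      _ ≤ 2 * ‖a‖ * ((2 * ‖a‖) ^ n * ‖x‖) := by nlinarith [norm_nonneg a]
      _ = _ := by ring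

/-- Kleinecke–Shirokov: a commutator `[a, b]` commuting with `a` is quasinilpotent. -/
theorem factorial_mul_norm_pow_innerDeriv_le {R : Type*} [NormedRing R] [NormedAlgebra ℝ R]
    {a b : R} (h : Commute a (innerDeriv a b)) {n : ℕ} (hn : n ≠ 0) :
    n ! * ‖innerDeriv a b ^ n‖ ≤ (2 * ‖a‖ * ‖b‖) ^ n := by
  calc (n ! : ℝ) * ‖innerDeriv a b ^ n‖ = ‖(innerDeriv a)^[n] (b ^ n)‖ := by
        rw [(innerDeriv_iterate_pow h n).1, ← Nat.cast_smul_eq_nsmul ℝ, norm_smul,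
          Real.norm_natCast]
    _ ≤ (2 * ‖a‖) ^ n * ‖b‖ ^ n := by
        grw [norm_innerDeriv_iterate_le, norm_pow_le' b (Nat.pos_of_ne_zero hn)]
    _ = _ := by ring

end Kleinecke

theorem eq_zero_of_apply_eq_smul_of_quasinilpotent {E : Type*} [NormedAddCommGroup E]
    [NormedSpace ℂ E] {Z : E →L[ℂ] E} {M : ℝ} (hZ : ∀ᶠ n in atTop, n ! * ‖Z ^ n‖ ≤ M ^ n)
    {x : E} (hx : x ≠ 0) {c : ℂ} (hc : Z x = c • x) : c = 0 := by
  by_contra hc0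
  have hpow (n : ℕ) : (Z ^ n) x = c ^ n • x := by
    induction n with
    | zero => simp
    | succ n ih => rw [pow_succ', mul_apply_eq_comp, ih, map_smul, hc, smul_smul, ← pow_succ]
  have hnorm (n : ℕ) : ‖c‖ ^ n ≤ ‖Z ^ n‖ := by
    have := (Z ^ n).le_opNorm x
    rw [hpow, norm_smul, norm_pow] at this
    exact le_of_mul_le_mul_right this (norm_pos_iff.mpr hx)
  have hsmall := (FloorSemiring.tendsto_pow_div_factorial_atTop (M / ‖c‖)).eventually_lt_const
    one_pos
  obtain ⟨n, hn, hlt⟩ := (hZ.and hsmall).exists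
  rw [div_pow, div_div, div_lt_one (by positivity)] at hlt
  nlinarith [hnorm n, (mod_cast n.factorial_pos : (0 : ℝ) < n !)]

theorem ContinuousLinearMap.hasRightInverse_of_surjective {𝕜 E F : Type*} [RCLike 𝕜]
    [NormedAddCommGroup E] [InnerProductSpace 𝕜 E] [CompleteSpace E]
    [NormedAddCommGroup F] [NormedSpace 𝕜 F] [CompleteSpace F] {f : E →L[𝕜] F}
    (hf : Surjective f) : f.HasRightInverse := by
  set K := f.ker
  have : CompleteSpace K := (isClosed_ker f).completeSpace_coe
  have hrange : K.orthogonalProjectionOnto.range = ⊤ :=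
    LinearMap.range_eq_top.mpr fun v => ⟨v, K.orthogonalProjectionOnto_mem_subspace_eq_self v⟩
  have hcompl : IsCompl f.ker K.orthogonalProjectionOnto.ker := by
    rw [Submodule.ker_orthogonalProjectionOnto]; exact K.isCompl_orthogonal
  let e := equivProdOfSurjectiveOfIsCompl f _ (LinearMap.range_eq_top.mpr hf) hrange hcompl
  exact ⟨(e.symm : F × K →L[𝕜] E) ∘L inl 𝕜 F K,
    fun y => congr_arg Prod.fst (e.apply_symm_apply (y, 0))⟩

section Eigenker

variable {E : Type*} [NormedAddCommGroup E] [NormedSpace ℂ E]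

/-- `ker (T - w)`, spelled as in `CowenDouglas` so that its hypotheses apply verbatim. -/
abbrev eigenker (T : E →L[ℂ] E) (w : ℂ) : Submodule ℂ E :=
  LinearMap.ker ((T - w • (1 : E →L[ℂ] E) : E →L[ℂ] E) : E →ₗ[ℂ] E)

theorem mem_eigenker {T : E →L[ℂ] E} {w : ℂ} {x : E} : x ∈ eigenker T w ↔ T x = w • x := by
  simp [sub_eq_zero]

theorem exists_eigensection [CompleteSpace E] {T R : E →L[ℂ] E} {w₀ : ℂ}
    (hR : RightInverse R ⇑(T - w₀ • (1 : E →L[ℂ] E))) {x₀ : E} (hx₀ : x₀ ∈ eigenker T w₀)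
    (hx₀' : x₀ ≠ 0) :
    ∃ U, IsOpen U ∧ w₀ ∈ U ∧ ∃ γ : ℂ → E, AnalyticOnNhd ℂ γ U ∧
      ∀ w ∈ U, γ w ∈ eigenker T w ∧ γ w ≠ 0 := by
  set u : ℂ → E →L[ℂ] E := fun w => 1 - (w - w₀) • R
  have hu : Differentiable ℂ u := by fun_prop
  have hU : IsOpen (u ⁻¹' {v | IsUnit v}) := Units.isOpen.preimage hu.continuous
  refine ⟨_, hU, by simp [u], fun w => Ring.inverse (u w) x₀, ?_, fun w hw => ?_⟩
  · refine DifferentiableOn.analyticOnNhd (fun w hw => ?_) hU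
    exact ((hu w).inverse hw).clm_apply (differentiableAt_const x₀) |>.differentiableWithinAt
  have hinv : u w (Ring.inverse (u w) x₀) = x₀ := by
    rw [← mul_apply_eq_comp, Ring.mul_inverse_cancel _ hw, one_apply_eq_self]
  set y := Ring.inverse (u w) x₀
  refine ⟨?_, fun hy => hx₀' (by rw [← hinv, show y = 0 from hy, map_zero])⟩
  have hy : y = x₀ + (w - w₀) • R y := by
    rw [← hinv]; simp [u]
  have hTy : (T - w₀ • (1 : E →L[ℂ] E)) y = (w - w₀) • y := by
    conv_lhs => rw [hy]
    rw [map_add, map_smul, show (T - w₀ • (1 : E →L[ℂ] E)) x₀ = 0 from hx₀, hR y, zero_add]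
  rw [LinearMap.mem_ker, coe_coe, ← sub_eq_zero.mpr hTy]
  simp only [sub_apply, smul_apply, one_apply_eq_self, sub_smul]
  abel

theorem mapsTo_eigenker {F : Type*} [NormedAddCommGroup F] [NormedSpace ℂ F] {A : F →L[ℂ] F}
    {B : E →L[ℂ] E} {X : E →L[ℂ] F} (h : A ∘L X = X ∘L B) {w : ℂ} {x : E}
    (hx : x ∈ eigenker B w) : X x ∈ eigenker A w := by
  rw [mem_eigenker] at hx ⊢
  rw [show A (X x) = X (B x) from DFunLike.congr_fun h x, hx, map_smul]

def vanishingSet {F : Type*} [NormedAddCommGroup F] [NormedSpace ℂ F] (T : E →L[ℂ] E)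
    (L : E →L[ℂ] F) : Set ℂ :=
  {w | eigenker T w ≤ LinearMap.ker (L : E →ₗ[ℂ] F)}

theorem mem_vanishingSet {F : Type*} [NormedAddCommGroup F] [NormedSpace ℂ F] {T : E →L[ℂ] E}
    {L : E →L[ℂ] F} {w : ℂ} :
    w ∈ vanishingSet T L ↔ eigenker T w ≤ LinearMap.ker (L : E →ₗ[ℂ] F) :=
  Iff.rfl

end Eigenker

namespace CowenDouglas

variable {H F : Type*} [NormedAddCommGroup H] [InnerProductSpace ℂ H]
  [NormedAddCommGroup F] [NormedSpace ℂ F] {n : ℕ} {Ω : Set ℂ} {T : H →L[ℂ] H} {w : ℂ}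

theorem finrank_eigenker (hT : CowenDouglas n Ω T) (hw : w ∈ Ω) :
    Module.finrank ℂ (eigenker T w) = n :=
  hT.2.2.2 w hw

theorem exists_mem_eigenker_ne_zero (hT : CowenDouglas n Ω T) (hn : n ≠ 0) (hw : w ∈ Ω) :
    ∃ x ∈ eigenker T w, x ≠ 0 :=
  (Submodule.ne_bot_iff _).mp fun h => hn (by rw [← hT.finrank_eigenker hw, h, finrank_bot])

theorem nontrivial (hT : CowenDouglas n Ω T) (hn : n ≠ 0) (hΩ : Ω.Nonempty) : Nontrivial H :=
  let ⟨_, hw⟩ := hΩ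
  let ⟨x, _, hx⟩ := hT.exists_mem_eigenker_ne_zero hn hw
  nontrivial_of_ne x 0 hx

theorem eq_zero_of_subset_vanishingSet (hT : CowenDouglas n Ω T) {L : H →L[ℂ] F}
    (h : Ω ⊆ vanishingSet T L) : L = 0 := by
  have hle : (⨆ w ∈ Ω, eigenker T w).topologicalClosure ≤ LinearMap.ker (L : H →ₗ[ℂ] F) :=
    Submodule.topologicalClosure_minimal _ (iSup₂_le fun _ hw => mem_vanishingSet.mp (h hw))
      (isClosed_ker L)
  rw [hT.2.2.1, top_le_iff] at hle
  ext x
  exact LinearMap.congr_fun (LinearMap.ker_eq_top.mp hle) x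

variable {x : H}

theorem eigenker_eq_span (hT : CowenDouglas 1 Ω T) (hw : w ∈ Ω) (hx : x ∈ eigenker T w)
    (hx₀ : x ≠ 0) : eigenker T w = ℂ ∙ x :=
  eq_span_singleton_of_mem_of_finrank_eq_one (hT.finrank_eigenker hw) hx hx₀

theorem mem_vanishingSet_iff (hT : CowenDouglas 1 Ω T) (hw : w ∈ Ω) (hx : x ∈ eigenker T w)
    (hx₀ : x ≠ 0) {L : H →L[ℂ] F} : w ∈ vanishingSet T L ↔ L x = 0 := by
  rw [mem_vanishingSet, hT.eigenker_eq_span hw hx hx₀,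
    Submodule.span_singleton_le_iff_mem, LinearMap.mem_ker, coe_coe]

theorem exists_apply_eq_smul_of_commute (hT : CowenDouglas 1 Ω T) {Z : H →L[ℂ] H}
    (hZ : Commute Z T) (hw : w ∈ Ω) (hx : x ∈ eigenker T w) (hx₀ : x ≠ 0) :
    ∃ c : ℂ, Z x = c • x := by
  have := mapsTo_eigenker hZ.eq.symm hx
  rw [hT.eigenker_eq_span hw hx hx₀, Submodule.mem_span_singleton] at this
  exact this.imp fun _ => Eq.symm

end CowenDouglas

def IsStronglyIrreducible {E : Type*} [NormedAddCommGroup E] [NormedSpace ℂ E]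
    (T : E →L[ℂ] E) : Prop :=
  ∀ P : E →L[ℂ] E, IsIdempotentElem P → Commute P T → P = 0 ∨ P = 1

namespace CowenDouglas

variable {H H' F F' : Type*} [NormedAddCommGroup H] [InnerProductSpace ℂ H] [CompleteSpace H]
  [NormedAddCommGroup H'] [InnerProductSpace ℂ H'] [CompleteSpace H']
  [NormedAddCommGroup F] [NormedSpace ℂ F] [NormedAddCommGroup F'] [NormedSpace ℂ F']
  {Ω : Set ℂ} {T : H →L[ℂ] H} {T' : H' →L[ℂ] H'}

/-- Near each point of `Ω`, a holomorphic frame `γ` of the eigenbundle exhibits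
`vanishingSet T L` as the zero set of the holomorphic function `L ∘ γ`. -/
theorem exists_ball_vanishingSet_eq_zeroSet (hT : CowenDouglas 1 Ω T) (hΩ : IsOpen Ω) {w₀ : ℂ}
    (hw₀ : w₀ ∈ Ω) (L : H →L[ℂ] F) :
    ∃ r > 0, ball w₀ r ⊆ Ω ∧ ∃ f : ℂ → F, AnalyticOnNhd ℂ f (ball w₀ r) ∧
      ∀ w ∈ ball w₀ r, w ∈ vanishingSet T L ↔ f w = 0 := by
  obtain ⟨R, hR⟩ := hasRightInverse_of_surjective (hT.2.1 w₀ hw₀)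
  obtain ⟨x₀, hx₀, hx₀'⟩ := hT.exists_mem_eigenker_ne_zero one_ne_zero hw₀
  obtain ⟨U, hU, hw₀U, γ, hγ, hγU⟩ := exists_eigensection hR hx₀ hx₀'
  obtain ⟨r, hr, hrU⟩ := Metric.isOpen_iff.mp (hU.inter hΩ) w₀ ⟨hw₀U, hw₀⟩
  refine ⟨r, hr, fun w hw => (hrU hw).2, fun w => L (γ w),
    fun w hw => L.analyticAt _ |>.comp (hγ w (hrU hw).1), fun w hw => ?_⟩
  exact hT.mem_vanishingSet_iff (hrU hw).2 (hγU w (hrU hw).1).1 (hγU w (hrU hw).1).2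

theorem isOpen_diff_vanishingSet (hT : CowenDouglas 1 Ω T) (hΩ : IsOpen Ω) (L : H →L[ℂ] F) :
    IsOpen (Ω \ vanishingSet T L) := by
  refine isOpen_iff_mem_nhds.mpr fun w₀ ⟨hw₀, hw₀V⟩ => ?_
  obtain ⟨r, hr, hrΩ, f, hf, hfV⟩ := hT.exists_ball_vanishingSet_eq_zeroSet hΩ hw₀ L
  have hf₀ : f w₀ ≠ 0 := fun h => hw₀V ((hfV w₀ (mem_ball_self hr)).mpr h)
  filter_upwards [ball_mem_nhds w₀ hr,
    (hf w₀ (mem_ball_self hr)).continuousAt.eventually_ne hf₀] with w hw hfw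
  exact ⟨hrΩ hw, fun h => hfw ((hfV w hw).mp h)⟩

/-- The identity theorem for vanishing sets. -/
theorem subset_vanishingSet (hT : CowenDouglas 1 Ω T) (hΩ : IsOpen Ω) (hΩc : IsPreconnected Ω)
    {L : H →L[ℂ] F} (h : (Ω ∩ interior (vanishingSet T L)).Nonempty) :
    Ω ⊆ vanishingSet T L := by
  refine (hΩc.subset_of_closure_inter_subset isOpen_interior h ?_).trans interior_subset
  rintro w₀ ⟨hw₀cl, hw₀⟩
  obtain ⟨r, hr, -, f, hf, hfV⟩ := hT.exists_ball_vanishingSet_eq_zeroSet hΩ hw₀ L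
  obtain ⟨z, hzB, hzV⟩ := _root_.mem_closure_iff.mp hw₀cl _ isOpen_ball (mem_ball_self hr)
  have hfz : f =ᶠ[𝓝 z] 0 := by
    filter_upwards [isOpen_interior.mem_nhds hzV, isOpen_ball.mem_nhds hzB] with w hwV hwB
    exact (hfV w hwB).mp (interior_subset hwV)
  have hf0 := hf.eqOn_zero_of_preconnected_of_eventuallyEq_zero
    (convex_ball w₀ r).isPreconnected hzB hfz
  exact interior_maximal (fun w hw => (hfV w hw).mpr (hf0 hw)) isOpen_ball (mem_ball_self hr)

theorem eq_zero_or_eq_zero_of_forall_mem_vanishingSet (hT : CowenDouglas 1 Ω T)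
    (hT' : CowenDouglas 1 Ω T') (hΩ : IsOpen Ω) (hΩc : IsPreconnected Ω) {L : H →L[ℂ] F}
    {L' : H' →L[ℂ] F'} (h : ∀ w ∈ Ω, w ∈ vanishingSet T L ∨ w ∈ vanishingSet T' L') :
    L = 0 ∨ L' = 0 := by
  by_cases hL : Ω ⊆ vanishingSet T L
  · exact Or.inl (hT.eq_zero_of_subset_vanishingSet hL)
  obtain ⟨w, hwΩ, hwV⟩ := Set.not_subset.mp hL
  refine Or.inr (hT'.eq_zero_of_subset_vanishingSet (hT'.subset_vanishingSet hΩ hΩc ⟨w, hwΩ, ?_⟩))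
  exact interior_maximal (fun z hz => (h z hz.1).resolve_left hz.2)
    (hT.isOpen_diff_vanishingSet hΩ L) ⟨hwΩ, hwV⟩


/-- An idempotent commuting with `T` acts on each `ker (T - w)` by `0` or `1`, so `Ω` is covered
by the vanishing sets of `P` and `1 - P`. -/
theorem isStronglyIrreducible (hT : CowenDouglas 1 Ω T) (hΩ : IsOpen Ω)
    (hΩc : IsPreconnected Ω) : IsStronglyIrreducible T := by
  intro P hP hPT
  have hcover (w : ℂ) (hw : w ∈ Ω) : w ∈ vanishingSet T P ∨ w ∈ vanishingSet T (1 - P) := by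
    obtain ⟨x, hx, hx₀⟩ := hT.exists_mem_eigenker_ne_zero one_ne_zero hw
    obtain ⟨c, hc⟩ := hT.exists_apply_eq_smul_of_commute hPT hw hx hx₀
    have hc' : IsIdempotentElem c := by
      have := DFunLike.congr_fun hP.eq x
      rw [mul_apply_eq_comp, hc, map_smul, hc, smul_smul] at this
      exact smul_left_injective ℂ hx₀ this
    rw [hT.mem_vanishingSet_iff hw hx hx₀, hT.mem_vanishingSet_iff hw hx hx₀, sub_apply,
      one_apply_eq_self, hc]
    rcases IsIdempotentElem.iff_eq_zero_or_one.mp hc' with rfl | rfl <;> simp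
  exact (hT.eq_zero_or_eq_zero_of_forall_mem_vanishingSet hT hΩ hΩc hcover).imp_right
    fun h => (sub_eq_zero.mp h).symm

/-- A commutator `T D - D T` commuting with `T` vanishes: it is quasinilpotent by
Kleinecke–Shirokov, while it acts on each one-dimensional `ker (T - w)` by a scalar. -/
theorem innerDeriv_eq_zero (hT : CowenDouglas 1 Ω T) {D : H →L[ℂ] H}
    (h : Commute T (innerDeriv T D)) : innerDeriv T D = 0 := by
  have hM : ∀ᶠ n in atTop, n ! * ‖innerDeriv T D ^ n‖ ≤ (2 * ‖T‖ * ‖D‖) ^ n :=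
    eventually_ne_atTop 0 |>.mono fun n hn => factorial_mul_norm_pow_innerDeriv_le h hn
  refine hT.eq_zero_of_subset_vanishingSet fun w hw => ?_
  obtain ⟨x, hx, hx₀⟩ := hT.exists_mem_eigenker_ne_zero one_ne_zero hw
  obtain ⟨c, hc⟩ := hT.exists_apply_eq_smul_of_commute h.symm hw hx hx₀
  rw [hT.mem_vanishingSet_iff hw hx hx₀, hc,
    eq_zero_of_apply_eq_smul_of_quasinilpotent hM hx₀ hc, zero_smul]

end CowenDouglas

section Block

variable {H₀ H₁ : Type*} [NormedAddCommGroup H₀] [NormedSpace ℂ H₀] [NormedAddCommGroup H₁]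
  [NormedSpace ℂ H₁]

/-- The operator matrix `[[A, B], [C, D]]` on `H₀ ⊕ H₁`. -/
def blockOp (A : H₀ →L[ℂ] H₀) (B : H₁ →L[ℂ] H₀) (C : H₀ →L[ℂ] H₁) (D : H₁ →L[ℂ] H₁) :
    WithLp 2 (H₀ × H₁) →L[ℂ] WithLp 2 (H₀ × H₁) :=
  ((WithLp.prodContinuousLinearEquiv 2 ℂ H₀ H₁).symm : H₀ × H₁ →L[ℂ] WithLp 2 (H₀ × H₁)) ∘L
    ((A ∘L fst ℂ H₀ H₁ + B ∘L snd ℂ H₀ H₁).prod (C ∘L fst ℂ H₀ H₁ + D ∘L snd ℂ H₀ H₁)) ∘L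
    ((WithLp.prodContinuousLinearEquiv 2 ℂ H₀ H₁) : WithLp 2 (H₀ × H₁) →L[ℂ] H₀ × H₁)

@[simp]
theorem blockOp_apply (A : H₀ →L[ℂ] H₀) (B : H₁ →L[ℂ] H₀) (C : H₀ →L[ℂ] H₁) (D : H₁ →L[ℂ] H₁)
    (v : WithLp 2 (H₀ × H₁)) :
    blockOp A B C D v = WithLp.toLp 2 (A v.fst + B v.snd, C v.fst + D v.snd) :=
  rfl

theorem blockOp₂_eq_blockOp (T₀ : H₀ →L[ℂ] H₀) (S : H₁ →L[ℂ] H₀) (T₁ : H₁ →L[ℂ] H₁) :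
    blockOp₂ T₀ S T₁ = blockOp T₀ S 0 T₁ := by
  ext v
  simp [blockOp₂, blockOp]

theorem blockOp_mul (A : H₀ →L[ℂ] H₀) (B : H₁ →L[ℂ] H₀) (C : H₀ →L[ℂ] H₁) (D : H₁ →L[ℂ] H₁)
    (A' : H₀ →L[ℂ] H₀) (B' : H₁ →L[ℂ] H₀) (C' : H₀ →L[ℂ] H₁) (D' : H₁ →L[ℂ] H₁) :
    blockOp A B C D * blockOp A' B' C' D' =
      blockOp (A ∘L A' + B ∘L C') (A ∘L B' + B ∘L D') (C ∘L A' + D ∘L C')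
        (C ∘L B' + D ∘L D') := by
  ext v
  simp only [mul_apply_eq_comp, blockOp_apply, WithLp.toLp_fst, WithLp.toLp_snd, map_add,
    add_apply, ContinuousLinearMap.comp_apply]
  congr 2 <;> abel

theorem blockOp_zero : blockOp (0 : H₀ →L[ℂ] H₀) (0 : H₁ →L[ℂ] H₀) 0 0 = 0 := by
  ext v
  simp [WithLp.ext_iff]

theorem blockOp_one : blockOp (1 : H₀ →L[ℂ] H₀) (0 : H₁ →L[ℂ] H₀) 0 1 = 1 := by
  ext v
  simp only [blockOp_apply, one_apply_eq_self, zero_apply, add_zero, zero_add, WithLp.ext_iff]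
  rfl

theorem blockOp_injective {A A' : H₀ →L[ℂ] H₀} {B B' : H₁ →L[ℂ] H₀} {C C' : H₀ →L[ℂ] H₁}
    {D D' : H₁ →L[ℂ] H₁} (h : blockOp A B C D = blockOp A' B' C' D') :
    A = A' ∧ B = B' ∧ C = C' ∧ D = D' := by
  have h₀ (x : H₀) := DFunLike.congr_fun h (WithLp.toLp 2 (x, 0))
  have h₁ (y : H₁) := DFunLike.congr_fun h (WithLp.toLp 2 (0, y))
  simp only [blockOp_apply, WithLp.ext_iff, Prod.ext_iff, WithLp.toLp_fst, WithLp.toLp_snd,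
    map_zero, add_zero, zero_add] at h₀ h₁
  exact ⟨ext fun x => (h₀ x).1, ext fun y => (h₁ y).1, ext fun x => (h₀ x).2,
    ext fun y => (h₁ y).2⟩

theorem exists_eq_blockOp (P : WithLp 2 (H₀ × H₁) →L[ℂ] WithLp 2 (H₀ × H₁)) :
    ∃ A B C D, P = blockOp A B C D := by
  set e := WithLp.prodContinuousLinearEquiv 2 ℂ H₀ H₁
  set Q : H₀ × H₁ →L[ℂ] H₀ × H₁ :=
    (e : WithLp 2 (H₀ × H₁) →L[ℂ] H₀ × H₁) ∘L P ∘L (e.symm : H₀ × H₁ →L[ℂ] WithLp 2 (H₀ × H₁))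
  refine ⟨fst ℂ H₀ H₁ ∘L Q ∘L inl ℂ H₀ H₁, fst ℂ H₀ H₁ ∘L Q ∘L inr ℂ H₀ H₁,
    snd ℂ H₀ H₁ ∘L Q ∘L inl ℂ H₀ H₁, snd ℂ H₀ H₁ ∘L Q ∘L inr ℂ H₀ H₁, ?_⟩
  ext v
  have hv : v = WithLp.toLp 2 (v.fst, 0) + WithLp.toLp 2 (0, v.snd) := by
    simp only [WithLp.ext_iff, WithLp.ofLp_add, Prod.mk_add_mk, add_zero, zero_add]
    rfl
  conv_lhs => rw [hv, map_add]
  rfl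

theorem not_isStronglyIrreducible_blockOp₂ [Nontrivial H₀] [Nontrivial H₁] (T₀ : H₀ →L[ℂ] H₀)
    (T₁ : H₁ →L[ℂ] H₁) (X : H₁ →L[ℂ] H₀) :
    ¬ IsStronglyIrreducible (blockOp₂ T₀ (T₀ ∘L X - X ∘L T₁) T₁) := by
  intro h
  have hP : IsIdempotentElem (blockOp 1 X 0 0) := by
    rw [IsIdempotentElem, blockOp_mul]; simp [one_def]
  have hPT : Commute (blockOp 1 X 0 0) (blockOp₂ T₀ (T₀ ∘L X - X ∘L T₁) T₁) := by
    rw [Commute, SemiconjBy, blockOp₂_eq_blockOp, blockOp_mul, blockOp_mul]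
    simp [one_def]
  rcases h _ hP hPT with h0 | h1
  · rw [← blockOp_zero] at h0
    exact one_ne_zero (blockOp_injective h0).1
  · rw [← blockOp_one] at h1
    exact one_ne_zero (blockOp_injective h1).2.2.2.symm

end Block

section TriangularBlocks

variable {H₀ H₁ : Type*} [NormedAddCommGroup H₀] [InnerProductSpace ℂ H₀] [CompleteSpace H₀]
  [NormedAddCommGroup H₁] [InnerProductSpace ℂ H₁] [CompleteSpace H₁]
  {Ω : Set ℂ} {T₀ : H₀ →L[ℂ] H₀} {T₁ : H₁ →L[ℂ] H₁} {S : H₁ →L[ℂ] H₀}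

theorem blockOp_lower_eq_zero_of_commute (hΩ : IsOpen Ω) (hΩc : IsPreconnected Ω)
    (h₀ : CowenDouglas 1 Ω T₀) (h₁ : CowenDouglas 1 Ω T₁) (hS : S ≠ 0)
    (hint : T₀ ∘L S = S ∘L T₁) {A : H₀ →L[ℂ] H₀} {B : H₁ →L[ℂ] H₀} {C : H₀ →L[ℂ] H₁}
    {D : H₁ →L[ℂ] H₁} (h : Commute (blockOp A B C D) (blockOp₂ T₀ S T₁)) : C = 0 := by
  rw [Commute, SemiconjBy, blockOp₂_eq_blockOp, blockOp_mul, blockOp_mul] at h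
  obtain ⟨-, -, hC, hD⟩ := blockOp_injective h
  simp only [comp_zero, zero_comp, add_zero, zero_add] at hC hD
  have hCS : C ∘L S = innerDeriv T₁ D := by
    rw [innerDeriv_apply, mul_def, mul_def, ← hD, add_sub_cancel_right]
  have hCS0 : C ∘L S = 0 := by
    rw [hCS]
    refine h₁.innerDeriv_eq_zero ?_
    rw [← hCS]
    show T₁ ∘L (C ∘L S) = (C ∘L S) ∘L T₁
    simp only [← ContinuousLinearMap.comp_assoc, ← hC]
    simp only [ContinuousLinearMap.comp_assoc, hint]
  have hcover (w : ℂ) (hw : w ∈ Ω) : w ∈ vanishingSet T₀ C ∨ w ∈ vanishingSet T₁ S := by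
    refine or_iff_not_imp_right.mpr fun hwS => ?_
    obtain ⟨y, hy, hSy⟩ : ∃ y ∈ eigenker T₁ w, S y ≠ 0 := by
      simpa [mem_vanishingSet, SetLike.le_def] using hwS
    rw [h₀.mem_vanishingSet_iff hw (mapsTo_eigenker hint hy) hSy]
    exact DFunLike.congr_fun hCS0 y
  exact (h₀.eq_zero_or_eq_zero_of_forall_mem_vanishingSet h₁ hΩ hΩc hcover).resolve_right hS

theorem isStronglyIrreducible_blockOp₂ (hΩ : IsOpen Ω) (hΩc : IsPreconnected Ω)
    (h₀ : CowenDouglas 1 Ω T₀) (h₁ : CowenDouglas 1 Ω T₁) (hS : S ≠ 0)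
    (hint : T₀ ∘L S = S ∘L T₁) (hX : ¬ ∃ X : H₁ →L[ℂ] H₀, S = T₀ ∘L X - X ∘L T₁) :
    IsStronglyIrreducible (blockOp₂ T₀ S T₁) := by
  intro P hP hPT
  obtain ⟨A, B, C, D, rfl⟩ := exists_eq_blockOp P
  obtain rfl := blockOp_lower_eq_zero_of_commute hΩ hΩc h₀ h₁ hS hint hPT
  rw [IsIdempotentElem, blockOp_mul] at hP
  rw [Commute, SemiconjBy, blockOp₂_eq_blockOp, blockOp_mul, blockOp_mul] at hPT
  obtain ⟨hA, hB, -, hD⟩ := blockOp_injective hP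
  obtain ⟨hAT, hBT, -, hDT⟩ := blockOp_injective hPT
  simp only [comp_zero, zero_comp, add_zero, zero_add] at hA hB hD hAT hBT hDT
  rcases h₀.isStronglyIrreducible hΩ hΩc A hA hAT with rfl | rfl <;>
    rcases h₁.isStronglyIrreducible hΩ hΩc D hD hDT with rfl | rfl
  · simp only [zero_comp, comp_zero, add_zero] at hB
    exact Or.inl (by rw [← hB, blockOp_zero])
  · simp only [zero_comp, zero_add, one_def, ContinuousLinearMap.comp_id] at hBT
    exact absurd ⟨-B, by simp [hBT]⟩ hX
  · simp only [one_def, ContinuousLinearMap.id_comp, comp_zero, add_zero] at hBT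
    exact absurd ⟨B, by simp [← hBT]⟩ hX
  · simp only [one_def, ContinuousLinearMap.id_comp, ContinuousLinearMap.comp_id, add_eq_left] at hB
    exact Or.inr (by rw [hB, blockOp_one])

end TriangularBlocks

theorem statement14_general
    {H₀ H₁ : Type*}
    [NormedAddCommGroup H₀] [InnerProductSpace ℂ H₀] [CompleteSpace H₀]
    [NormedAddCommGroup H₁] [InnerProductSpace ℂ H₁] [CompleteSpace H₁]
    (Ω : Set ℂ) (hΩopen : IsOpen Ω) (hΩconn : IsConnected Ω)
    (T₀ : H₀ →L[ℂ] H₀) (T₁ : H₁ →L[ℂ] H₁) (S : H₁ →L[ℂ] H₀)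
    (h₀ : CowenDouglas 1 Ω T₀) (h₁ : CowenDouglas 1 Ω T₁)
    (hS : S ≠ 0) (hint : T₀ ∘L S = S ∘L T₁) :
    (∀ P : WithLp 2 (H₀ × H₁) →L[ℂ] WithLp 2 (H₀ × H₁),
        P * P = P →
        P * blockOp₂ T₀ S T₁ = blockOp₂ T₀ S T₁ * P →
        P = 0 ∨ P = 1) ↔
      ¬ ∃ X : H₁ →L[ℂ] H₀, S = T₀ ∘L X - X ∘L T₁ := by
  refine ⟨fun hirr ⟨X, hX⟩ => ?_,
    isStronglyIrreducible_blockOp₂ hΩopen hΩconn.isPreconnected h₀ h₁ hS hint⟩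
  have := h₀.nontrivial one_ne_zero hΩconn.nonempty
  have := h₁.nontrivial one_ne_zero hΩconn.nonempty
  exact not_isStronglyIrreducible_blockOp₂ T₀ T₁ X (hX ▸ hirr)

/-- `T ∈ 𝓕B₂(Ω)` is strongly irreducible iff `S` is not in the range of the Rosenblum
operator `σ_{T₀,T₁} : X ↦ T₀X - XT₁`. -/
theorem statement14
    {H₀ H₁ : Type*}
    [NormedAddCommGroup H₀] [InnerProductSpace ℂ H₀] [CompleteSpace H₀]
    [TopologicalSpace.SeparableSpace H₀]
    [NormedAddCommGroup H₁] [InnerProductSpace ℂ H₁] [CompleteSpace H₁]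
    [TopologicalSpace.SeparableSpace H₁]
    (Ω : Set ℂ) (hΩopen : IsOpen Ω) (hΩconn : IsConnected Ω)
    (T₀ : H₀ →L[ℂ] H₀) (T₁ : H₁ →L[ℂ] H₁) (S : H₁ →L[ℂ] H₀)
    (h₀ : CowenDouglas 1 Ω T₀) (h₁ : CowenDouglas 1 Ω T₁)
    (hS : S ≠ 0) (hint : T₀ ∘L S = S ∘L T₁) :
    (∀ P : WithLp 2 (H₀ × H₁) →L[ℂ] WithLp 2 (H₀ × H₁),
        P * P = P →
        P * blockOp₂ T₀ S T₁ = blockOp₂ T₀ S T₁ * P →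
        P = 0 ∨ P = 1) ↔
      ¬ ∃ X : H₁ →L[ℂ] H₀, S = T₀ ∘L X - X ∘L T₁ :=
  statement14_general Ω hΩopen hΩconn T₀ T₁ S h₀ h₁ hS hint
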